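/- arXiv:math/0512581 — 3 statements merged into one kernel-verified Lean document; each statement's English description precedes it below -/
import Mathlib

section
/- Let H be a Hopf algebra over a field k with bijective antipode σ, and let B ⊆ H be a left coideal subalgebra. Fix an integer N ≥ 1 and families of elements ℓ(i,j), ℓ⁺(i,j), ℓ⁻(i,j) ∈ H (1 ≤ i,j ≤ N) together with scalars R^{ij}_{kl}, R̃^{ij}_{kl} ∈ k satisfying: (a) the N² elements ℓ(i,j) are linearly independent over k; (b) Δℓ(i,j) = Σ_{m,n} ℓ(m,n) ⊗ σ(ℓ⁻(i,m))·ℓ⁺(n,j); (c) Δℓ⁺(i,j) = Σ_k ℓ⁺(i,k) ⊗ ℓ⁺(k,j), Δℓ⁻(i,j) = Σ_k ℓ⁻(i,k) ⊗ ℓ⁻(k,j), and ε(ℓ⁺(i,j)) = ε(ℓ⁻(i,j)) = δ_{ij}; (d) (ad_r σ(ℓ⁻(i,m)))(ℓ(k,j)) = Σ_{a,b,l} R^{lk}_{ma} · R̃^{ib}_{lj} · ℓ(a,b) for all i,m,k,j; (e) (ad_r σ⁻¹(ℓ⁺(n,i)))(ℓ(k,j)) = Σ_{a,b,l} R^{bn}_{jl}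 · R̃^{kl}_{ai} · ℓ(a,b) for all n,i,k,j. Let J = (J^j_i) be an N×N matrix over k and set C = Σ_{i,j} J^j_i ℓ(i,j). If C ∈ B and (ad_r b)C = ε(b)·C for all b ∈ B, then J satisfies the reflection equation J₁ R̃ J₂ R = R₂₁ J₂ R̃₂₁ J₁; explicitly, for all indices a, b, m, n one has Σ_{i,j,k,l} J^n_i · R̃^{ib}_{lj} · J^j_k · R^{lk}_{ma} = Σ_{i,j,k,l} R^{bn}_{jl} · J^j_k · R̃^{kl}_{ai} · J^i_m. -/
open scoped TensorProduct

/-- The right adjoint action `(ad_r m) u = σ(m₍₁₎) * u * m₍₂₎`, as a linear map in `u`. -/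
noncomputable def adR (k : Type*) {H : Type*} [Field k] [Ring H] [HopfAlgebra k H]
    (m : H) : H →ₗ[k] H :=
  TensorProduct.lift
    (LinearMap.mk₂ k
      (fun a b => (LinearMap.mulLeft k (HopfAlgebra.antipode (R := k) a)).comp
        (LinearMap.mulRight k b))
      (fun a a' b => by ext x; simp [add_mul, mul_add])
      (fun c a b => by ext x; simp [smul_mul_assoc])
      (fun a b b' => by ext x; simp [mul_add])
      (fun c a b => by ext x; simp [mul_smul_comm]))
    (Coalgebra.comul (R := k) m)

/-- The left adjoint action `(ad_l m) u = m₍₁₎ * u * σ(m₍₂₎)`, as a linear map in `u`. -/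
noncomputable def adL (k : Type*) {H : Type*} [Field k] [Ring H] [HopfAlgebra k H]
    (m : H) : H →ₗ[k] H :=
  TensorProduct.lift
    (LinearMap.mk₂ k
      (fun a b => (LinearMap.mulLeft k a).comp
        (LinearMap.mulRight k (HopfAlgebra.antipode (R := k) b)))
      (fun a a' b => by ext x; simp [add_mul, mul_add])
      (fun c a b => by ext x; simp [smul_mul_assoc])
      (fun a b b' => by ext x; simp [mul_add])
      (fun c a b => by ext x; simp [mul_smul_comm]))
    (Coalgebra.comul (R := k) m)

/-!
Write `C = Σ J^j_i ℓ(i,j)`. By (b), `ΔC = Σ ℓ(m,n) ⊗ b(m,n)` with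
`b(m,n) = Σ J^j_i σ(ℓ⁻(i,m)) ℓ⁺(n,j)`; since the `ℓ(m,n)` are linearly independent and `B` is a
left coideal, every `b(m,n)` lies in `B`. An `ad_r(B)`-invariant element commutes with `B`,
because `c b = Σ b₍₁₎ · (ad_r b₍₂₎) c` in any Hopf algebra. As a matrix, `b = X Jᵀ Z` with
`X = σ(ℓ⁻)ᵀ` and `Z = (ℓ⁺)ᵀ`, which have the one-sided inverses `σ²(ℓ⁻)ᵀ` and `σ⁻¹(ℓ⁺)ᵀ`.
Conjugating `[C, X Jᵀ Z] = 0` by them gives `A Jᵀ = Jᵀ A'`, where `A`, `A'` are the matrices of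
`(ad_r σ ℓ⁻)(C)` and `(ad_r σ⁻¹ ℓ⁺)(C)`. Comparing coefficients of `ℓ(a,b)` by (d) and (e)
gives the reflection equation.
-/

open Coalgebra HopfAlgebra TensorProduct WithConv
open scoped RingTheory.LinearMap

namespace HopfAlgebra
variable {R A : Type*} [CommSemiring R] [Semiring A] [HopfAlgebra R A]

lemma sum_antipode_tmul_mul_comul {ι : Type*} {b : A} (𝓡 : Repr R b ι) (x : A) :
    ∑ i ∈ 𝓡.index, (antipode R (𝓡.left i) ⊗ₜ[R] x) * comul (𝓡.right i) = 1 ⊗ₜ (x * b) := by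
  let T : A ⊗[R] (A ⊗[R] A) →ₗ[R] A ⊗[R] A :=
    ((LinearMap.mul' R A ∘ₗ (antipode R ⊗ₘ .id)) ⊗ₘ LinearMap.mulLeft R x) ∘ₗ
      (TensorProduct.assoc R A A A).symm.toLinearMap
  have hT (u v w : A) : T (u ⊗ₜ (v ⊗ₜ w)) = (antipode R u * v) ⊗ₜ (x * w) := rfl
  have coassoc := congrArg T
    (sum_tmul_tmul_eq 𝓡 (fun i ↦ ℛ R (𝓡.left i)) (fun i ↦ ℛ R (𝓡.right i)))
  simp only [map_sum, hT] at coassoc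
  calc ∑ i ∈ 𝓡.index, (antipode R (𝓡.left i) ⊗ₜ[R] x) * comul (𝓡.right i)
      = ∑ i ∈ 𝓡.index, ∑ j ∈ (ℛ R (𝓡.right i)).index,
          (antipode R (𝓡.left i) * (ℛ R (𝓡.right i)).left j) ⊗ₜ[R]
            (x * (ℛ R (𝓡.right i)).right j) := by
        simp [← (ℛ R (𝓡.right _)).eq, Finset.mul_sum]
    _ = ∑ i ∈ 𝓡.index, (counit (R := R) (𝓡.left i) • (1 : A)) ⊗ₜ[R] (x * 𝓡.right i) := by
        simp [← coassoc, ← TensorProduct.sum_tmul, sum_antipode_mul_eq_smul]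
    _ = 1 ⊗ₜ (x * b) := by
        simp_rw [TensorProduct.smul_tmul, ← TensorProduct.tmul_sum, ← mul_smul_comm,
          ← Finset.mul_sum, sum_counit_smul]

lemma comul_left_inv :
    toConv ((antipode R ⊗ₘ antipode R) ∘ₗ (TensorProduct.comm R A A).toLinearMap ∘ₗ comul) *
      toConv (comul (R := R) (A := A)) = 1 := by
  ext a
  let 𝓡 := ℛ R a
  let T : A ⊗[R] (A ⊗[R] A) →ₗ[R] A ⊗[R] A :=
    LinearMap.mul' R (A ⊗[R] A) ∘ₗ
      (((antipode R ⊗ₘ antipode R) ∘ₗ (TensorProduct.comm R A A).toLinearMap) ⊗ₘ comul) ∘ₗ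
      (TensorProduct.assoc R A A A).symm.toLinearMap
  have hT (u v w : A) : T (u ⊗ₜ (v ⊗ₜ w)) = (antipode R v ⊗ₜ antipode R u) * comul w := rfl
  have coassoc := congrArg T
    (sum_tmul_tmul_eq 𝓡 (fun i ↦ ℛ R (𝓡.left i)) (fun i ↦ ℛ R (𝓡.right i)))
  simp only [map_sum, hT] at coassoc
  rw [𝓡.convMul_apply]
  calc _ = ∑ i ∈ 𝓡.index, ∑ j ∈ (ℛ R (𝓡.left i)).index,
        (antipode R ((ℛ R (𝓡.left i)).right j) ⊗ₜ antipode R ((ℛ R (𝓡.left i)).left j)) *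
          comul (𝓡.right i) := by
        simp [← (ℛ R (𝓡.left _)).eq, Finset.sum_mul]
    _ = ∑ i ∈ 𝓡.index, (1 : A) ⊗ₜ[R] (antipode R (𝓡.left i) * 𝓡.right i) := by
        simp only [coassoc, sum_antipode_tmul_mul_comul]
    _ = _ := by
        rw [← TensorProduct.tmul_sum, sum_antipode_mul_eq_smul]
        simp [Algebra.TensorProduct.one_def, Algebra.algebraMap_eq_smul_one,
          TensorProduct.tmul_smul]

lemma comul_antipode (a : A) :
    comul (antipode R a) = (antipode R ⊗ₘ antipode R) (TensorProduct.comm R A A (comul a)) := by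
  have := left_inv_eq_right_inv comul_left_inv (LinearMap.comul_right_inv (R := R) (C := A))
  exact (LinearMap.congr_fun (congrArg ofConv this) a).symm

lemma comul_inverse_antipode {σinv : A →ₗ[R] A} (hσ1 : ∀ x, σinv (antipode R x) = x)
    (hσ2 : ∀ x, antipode R (σinv x) = x) (a : A) :
    comul (σinv a) = (σinv ⊗ₘ σinv) (TensorProduct.comm R A A (comul a)) := by
  conv_rhs => rw [← hσ2 a, comul_antipode]
  rw [← TensorProduct.map_comm, ← LinearMap.comp_apply (σinv ⊗ₘ σinv),
    ← TensorProduct.map_comp, show σinv ∘ₗ antipode R = .id from LinearMap.ext hσ1]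
  simp

end HopfAlgebra

section AdjointAction
variable {k H : Type*} [Field k] [Ring H] [HopfAlgebra k H]

lemma adR_apply_of_comul_eq {m : H} {ι : Type*} (s : Finset ι) (f g : ι → H)
    (h : comul (R := k) m = ∑ t ∈ s, f t ⊗ₜ[k] g t) (u : H) :
    adR k m u = ∑ t ∈ s, antipode k (f t) * u * g t := by
  simp [adR, h, TensorProduct.lift.tmul, mul_assoc]

variable (k H) in
noncomputable def adRₗ : H →ₗ[k] H →ₗ[k] H where
  toFun := adR k
  map_add' x y := by simp only [adR, map_add]
  map_smul' r x := by simp only [adR, map_smul, RingHom.id_apply]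

@[simp] lemma adRₗ_apply (m : H) : adRₗ k H m = adR k m := rfl

lemma sum_mul_adR {b : H} {ι : Type*} (𝓡 : Repr k b ι) (c : H) :
    ∑ i ∈ 𝓡.index, 𝓡.left i * adR k (𝓡.right i) c = c * b := by
  let T : H ⊗[k] (H ⊗[k] H) →ₗ[k] H :=
    LinearMap.mul' k H ∘ₗ
      ((LinearMap.mul' k H ∘ₗ (.id ⊗ₘ antipode k)) ⊗ₘ LinearMap.mulLeft k c) ∘ₗ
      (TensorProduct.assoc k H H H).symm.toLinearMap
  have hT (x y z : H) : T (x ⊗ₜ (y ⊗ₜ z)) = x * antipode k y * (c * z) := rfl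
  have coassoc := congrArg T
    (sum_tmul_tmul_eq 𝓡 (fun i ↦ ℛ k (𝓡.left i)) (fun i ↦ ℛ k (𝓡.right i)))
  simp only [map_sum, hT] at coassoc
  calc ∑ i ∈ 𝓡.index, 𝓡.left i * adR k (𝓡.right i) c
      = ∑ i ∈ 𝓡.index, ∑ j ∈ (ℛ k (𝓡.right i)).index, 𝓡.left i *
          antipode k ((ℛ k (𝓡.right i)).left j) * (c * (ℛ k (𝓡.right i)).right j) := by
        refine Finset.sum_congr rfl fun i _ ↦ ?_
        rw [adR_apply_of_comul_eq _ _ _ (ℛ k (𝓡.right i)).eq.symm, Finset.mul_sum]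
        simp only [mul_assoc]
    _ = ∑ i ∈ 𝓡.index, counit (R := k) (𝓡.left i) • (c * 𝓡.right i) := by
        rw [← coassoc]
        refine Finset.sum_congr rfl fun i _ ↦ ?_
        rw [← Finset.sum_mul, sum_mul_antipode_eq_smul, smul_one_mul]
    _ = c * b := by
        simp_rw [← mul_smul_comm, ← Finset.mul_sum, sum_counit_smul]

lemma commute_of_adR_eq_counit_smul {B : Set H}
    (hB : ∀ b ∈ B, comul (R := k) b ∈
      Submodule.span k {t : H ⊗[k] H | ∃ (h : H) (y : H), y ∈ B ∧ t = h ⊗ₜ[k] y})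
    {c : H} (hc : ∀ b ∈ B, adR k b c = counit (R := k) b • c) {b : H} (hb : b ∈ B) :
    Commute c b := by
  let Φ : H ⊗[k] H →ₗ[k] H := LinearMap.mul' k H ∘ₗ (.id ⊗ₘ (adRₗ k H).flip c)
  let Ψ : H ⊗[k] H →ₗ[k] H :=
    LinearMap.mulRight k c ∘ₗ (TensorProduct.rid k H).toLinearMap ∘ₗ counit.lTensor H
  have hΦ : Φ (comul b) = c * b := by
    rw [← (ℛ k b).eq, map_sum]
    exact sum_mul_adR (ℛ k b) c
  have hΨ : Ψ (comul b) = b * c := by simp [Ψ]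
  have hΦΨ : Set.EqOn Φ Ψ
      (Submodule.span k {t : H ⊗[k] H | ∃ (h : H) (y : H), y ∈ B ∧ t = h ⊗ₜ[k] y}) := by
    refine LinearMap.eqOn_span' ?_
    rintro _ ⟨x, y, hy, rfl⟩
    simp [Φ, Ψ, hc y hy]
  exact hΦ.symm.trans ((hΦΨ (hB b hb)).trans hΨ)

end AdjointAction

section Coefficients
variable {k M N ι : Type*} [Field k] [AddCommGroup M] [Module k M] [AddCommGroup N] [Module k N]

lemma LinearIndependent.exists_coord [DecidableEq ι] {v : ι → M} (hv : LinearIndependent k v)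
    (i : ι) : ∃ f : M →ₗ[k] k, ∀ j, f (v j) = if j = i then 1 else 0 := by
  obtain ⟨g, hg⟩ := (Finsupp.linearCombination k v).exists_leftInverse_of_injective
    (LinearMap.ker_eq_bot.mpr hv)
  refine ⟨Finsupp.lapply i ∘ₗ g, fun j ↦ ?_⟩
  have : g (v j) = Finsupp.single j 1 := by
    simpa using LinearMap.congr_fun hg (Finsupp.single j 1)
  simp [this, Finsupp.single_apply]

lemma mem_of_sum_tmul_mem_span [Fintype ι] {v : ι → M} (hv : LinearIndependent k v)
    {W : Submodule k N} {w : ι → N}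
    (h : ∑ j, v j ⊗ₜ[k] w j ∈ Submodule.span k {t : M ⊗[k] N | ∃ x y, y ∈ W ∧ t = x ⊗ₜ[k] y})
    (i : ι) : w i ∈ W := by
  classical
  obtain ⟨f, hf⟩ := hv.exists_coord i
  let Φ : M ⊗[k] N →ₗ[k] N := (TensorProduct.lid k N).toLinearMap ∘ₗ f.rTensor N
  have hspan : Submodule.span k {t : M ⊗[k] N | ∃ x y, y ∈ W ∧ t = x ⊗ₜ[k] y} ≤ W.comap Φ := by
    rw [Submodule.span_le]
    rintro _ ⟨x, y, hy, rfl⟩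
    simpa [Φ] using W.smul_mem (f x) hy
  simpa [Φ, hf] using hspan h

end Coefficients

lemma mul_mul_eq_mul_mul_of_commute {M : Type*} [Monoid M] {c l x y z r : M}
    (h : Commute c (x * y * z)) (hl : l * x = 1) (hr : z * r = 1) :
    l * c * x * y = y * (z * c * r) :=
  calc l * c * x * y = l * (c * (x * y * z)) * r := by simp only [mul_assoc, hr, mul_one]
    _ = l * (x * y * z * c) * r := by rw [h.eq]
    _ = y * (z * c * r) := by simp only [← mul_assoc, hl, one_mul]

structure IsMultiplicativeMatrix (k : Type*) {H ι : Type*} [Field k] [Ring H] [HopfAlgebra k H]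
    [Fintype ι] [DecidableEq ι] (x : ι → ι → H) : Prop where
  comul_eq : ∀ i j, comul (R := k) (x i j) = ∑ p, x i p ⊗ₜ[k] x p j
  counit_eq : ∀ i j, counit (R := k) (x i j) = if i = j then 1 else 0

namespace IsMultiplicativeMatrix
variable {k H ι : Type*} [Field k] [Ring H] [HopfAlgebra k H] [Fintype ι] [DecidableEq ι]
  {x y : ι → ι → H} {σinv : H →ₗ[k] H}

lemma sum_mul_antipode (hx : IsMultiplicativeMatrix k x) (i j : ι) :
    ∑ p, x i p * antipode k (x p j) = if i = j then 1 else 0 := by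
  rw [sum_mul_antipode_eq_smul ⟨Finset.univ, _, _, (hx.comul_eq i j).symm⟩, hx.counit_eq]
  simp

lemma sum_antipode_antipode_mul_antipode (hx : IsMultiplicativeMatrix k x) (i j : ι) :
    ∑ p, antipode k (antipode k (x p j)) * antipode k (x i p) = if i = j then 1 else 0 := by
  simpa [map_sum, antipode_mul_antidistrib, apply_ite (antipode k), antipode_one]
    using congrArg (antipode k) (hx.sum_mul_antipode i j)

lemma sum_mul_inverse_antipode (hx : IsMultiplicativeMatrix k x)
    (hσ1 : ∀ x, σinv (antipode k x) = x) (hσ2 : ∀ x, antipode k (σinv x) = x) (i j : ι) :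
    ∑ p, x p j * σinv (x i p) = if i = j then 1 else 0 := by
  apply Function.LeftInverse.injective hσ1
  simpa [map_sum, antipode_mul_antidistrib, hσ2, apply_ite (antipode k), antipode_one]
    using hx.sum_mul_antipode i j

lemma adR_antipode_apply (hx : IsMultiplicativeMatrix k x) (i j : ι) (u : H) :
    adR k (antipode k (x i j)) u =
      ∑ p, antipode k (antipode k (x p j)) * u * antipode k (x i p) :=
  adR_apply_of_comul_eq _ _ _ (by simp [comul_antipode, hx.comul_eq]) u

lemma adR_inverse_antipode_apply (hx : IsMultiplicativeMatrix k x)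
    (hσ1 : ∀ x, σinv (antipode k x) = x) (hσ2 : ∀ x, antipode k (σinv x) = x) (i j : ι) (u : H) :
    adR k (σinv (x i j)) u = ∑ p, x p j * u * σinv (x i p) := by
  rw [adR_apply_of_comul_eq Finset.univ (fun p ↦ σinv (x p j)) (fun p ↦ σinv (x i p))
    (by simp [comul_inverse_antipode hσ1 hσ2, hx.comul_eq]) u]
  simp [hσ2]

lemma sum_smul_adR_antipode_eq (hx : IsMultiplicativeMatrix k x)
    (hy : IsMultiplicativeMatrix k y)
    (hσ1 : ∀ x, σinv (antipode k x) = x) (hσ2 : ∀ x, antipode k (σinv x) = x)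
    (J : ι → ι → k) {c : H}
    (hc : ∀ m n, Commute c (∑ i, ∑ j, J j i • (antipode k (x i m) * y n j))) (m n : ι) :
    ∑ i, J n i • adR k (antipode k (x i m)) c = ∑ i, J i m • adR k (σinv (y n i)) c := by
  let L : Matrix ι ι H := .of fun m p ↦ antipode k (antipode k (x p m))
  let X : Matrix ι ι H := .of fun p i ↦ antipode k (x i p)
  let Y : Matrix ι ι H := .of fun i j ↦ algebraMap k H (J j i)
  let Z : Matrix ι ι H := .of fun j n ↦ y n j
  let R : Matrix ι ι H := .of fun p n ↦ σinv (y n p)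
  have hl : L * X = 1 := by
    ext m i
    simp [L, X, Matrix.mul_apply, Matrix.one_apply, hx.sum_antipode_antipode_mul_antipode,
      eq_comm]
  have hr : Z * R = 1 := by
    ext j n
    simp [Z, R, Matrix.mul_apply, Matrix.one_apply, hy.sum_mul_inverse_antipode hσ1 hσ2,
      eq_comm]
  have hXYZ (m n : ι) : (X * Y * Z) m n = ∑ i, ∑ j, J j i • (antipode k (x i m) * y n j) := by
    simpa [X, Y, Z, Matrix.mul_apply, Finset.sum_mul, Algebra.smul_def, Algebra.commutes,
      mul_assoc] using Finset.sum_comm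
  have hcomm : Commute (Matrix.scalar ι c) (X * Y * Z) := by
    ext m n
    simpa [Matrix.scalar_apply, hXYZ] using (hc m n).eq
  have key : L * Matrix.scalar ι c * X * Y = Y * (Z * Matrix.scalar ι c * R) :=
    mul_mul_eq_mul_mul_of_commute hcomm hl hr
  simpa [L, X, Y, Z, R, Matrix.mul_apply, Matrix.scalar_apply, Matrix.diagonal_apply,
    hx.adR_antipode_apply, hy.adR_inverse_antipode_apply hσ1 hσ2, Algebra.smul_def,
    Algebra.commutes, mul_assoc] using congr_fun₂ key m n

end IsMultiplicativeMatrix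

theorem reflection_equation_of_central_general
    (k H : Type*) [Field k] [Ring H] [HopfAlgebra k H]
    (σinv : H →ₗ[k] H)
    (hσ1 : ∀ x : H, σinv (HopfAlgebra.antipode (R := k) x) = x)
    (hσ2 : ∀ x : H, HopfAlgebra.antipode (R := k) (σinv x) = x)
    (B : Subalgebra k H)
    (hB : ∀ b ∈ B, Coalgebra.comul (R := k) b ∈
      Submodule.span k {t : H ⊗[k] H | ∃ (h : H) (y : H), y ∈ B ∧ t = h ⊗ₜ[k] y})
    (N : ℕ)
    (ℓ ℓp ℓm : Fin N → Fin N → H)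
    (Rm Rtm : Fin N → Fin N → Fin N → Fin N → k)
    -- (a) linear independence of the ℓ(i,j)
    (hlin : LinearIndependent k fun p : Fin N × Fin N => ℓ p.1 p.2)
    -- (b) coproduct of ℓ:  Δℓ(i,j) = Σ_{m,n} ℓ(m,n) ⊗ σ(ℓ⁻(i,m))·ℓ⁺(n,j)
    (hΔℓ : ∀ i j, Coalgebra.comul (R := k) (ℓ i j) =
      ∑ m, ∑ n, ℓ m n ⊗ₜ[k]
        (HopfAlgebra.antipode (R := k) (ℓm i m) * ℓp n j))
    -- (c) coproducts and counits of ℓ⁺, ℓ⁻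
    (hΔp : ∀ i j, Coalgebra.comul (R := k) (ℓp i j) = ∑ m, ℓp i m ⊗ₜ[k] ℓp m j)
    (hΔm : ∀ i j, Coalgebra.comul (R := k) (ℓm i j) = ∑ m, ℓm i m ⊗ₜ[k] ℓm m j)
    (hεp : ∀ i j, Coalgebra.counit (R := k) (ℓp i j) = if i = j then (1 : k) else 0)
    (hεm : ∀ i j, Coalgebra.counit (R := k) (ℓm i j) = if i = j then (1 : k) else 0)
    -- (d) action of ad_r σ(ℓ⁻(i,m)) on ℓ(k,j)
    (hd : ∀ i m i' j, adR k (HopfAlgebra.antipode (R := k) (ℓm i m)) (ℓ i' j) =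
      ∑ a, ∑ b, ∑ l, (Rm l i' m a * Rtm i b l j) • ℓ a b)
    -- (e) action of ad_r σ⁻¹(ℓ⁺(n,i)) on ℓ(k,j)
    (he : ∀ n i i' j, adR k (σinv (ℓp n i)) (ℓ i' j) =
      ∑ a, ∑ b, ∑ l, (Rm b n j l * Rtm i' l a i) • ℓ a b)
    (J : Fin N → Fin N → k)
    -- C = Σ_{i,j} J^j_i ℓ(i,j) belongs to B and is ad_r(B)-invariant
    (hCB : (∑ i, ∑ j, J j i • ℓ i j) ∈ B)
    (hCinv : ∀ b ∈ B, adR k b (∑ i, ∑ j, J j i • ℓ i j) =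
      Coalgebra.counit (R := k) b • ∑ i, ∑ j, J j i • ℓ i j) :
    ∀ a b m n : Fin N,
      ∑ i, ∑ j, ∑ i', ∑ l, J n i * Rtm i b l j * J j i' * Rm l i' m a
        = ∑ i, ∑ j, ∑ i', ∑ l, Rm b n j l * J j i' * Rtm i' l a i * J i m := by
  intro a b m n
  let coeff (m n : Fin N) : H := ∑ i, ∑ j, J j i • (antipode k (ℓm i m) * ℓp n j)
  have hΔC : comul (R := k) (∑ i, ∑ j, J j i • ℓ i j) =
      ∑ p : Fin N × Fin N, ℓ p.1 p.2 ⊗ₜ[k] coeff p.1 p.2 := by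
    simp only [map_sum, map_smul, hΔℓ, Finset.smul_sum, coeff, TensorProduct.tmul_sum,
      TensorProduct.tmul_smul]
    rw [← Fintype.sum_prod_type']
    conv_lhs => enter [2, q]; rw [← Fintype.sum_prod_type']
    conv_rhs => enter [2, p]; rw [← Fintype.sum_prod_type']
    exact Finset.sum_comm
  have hcoeff_mem (m n : Fin N) : coeff m n ∈ B :=
    mem_of_sum_tmul_mem_span hlin (W := Subalgebra.toSubmodule B) (hΔC ▸ hB _ hCB) (m, n)
  have hcomm (m n : Fin N) : Commute (∑ i, ∑ j, J j i • ℓ i j) (coeff m n) :=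
    commute_of_adR_eq_counit_smul (B := (B : Set H)) hB hCinv (hcoeff_mem m n)
  have key := IsMultiplicativeMatrix.sum_smul_adR_antipode_eq ⟨hΔm, hεm⟩ ⟨hΔp, hεp⟩ hσ1 hσ2
    J hcomm m n
  obtain ⟨f, hf⟩ := hlin.exists_coord (a, b)
  have hf' (a' b' : Fin N) : f (ℓ a' b') = if a' = a ∧ b' = b then 1 else 0 := by
    simpa using hf (a', b')
  have coeff_ab := congrArg f key
  simp only [map_sum, map_smul, hd, he, hf', ite_and, smul_eq_mul, mul_ite, mul_one, mul_zero,
    Finset.sum_ite_irrel, Finset.sum_const_zero, Finset.sum_ite_eq', Finset.mem_univ, ↓reduceIte,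
    Finset.mul_sum] at coeff_ab
  -- both sides agree with `coeff_ab` up to the order of the sums over `j` and `i'`
  convert coeff_ab using 2 with i <;> rw [Finset.sum_comm] <;>
    simp only [mul_comm, mul_left_comm]

/-- Central elements of a left coideal subalgebra lying in the span of an `l`-functional
family yield solutions of the reflection equation (abstract form of the paper's
Proposition 3.1).  Here `ℓ i j`, `ℓp i j`, `ℓm i j` play the roles of `l(cⁱⱼ)`,
`l⁺(cⁱⱼ)`, `l⁻(cⁱⱼ)`, and `Rm i j i' j'`, `Rtm i j i' j'` denote `R^{ij}_{i'j'}`,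
`R̃^{ij}_{i'j'}`.  If `C = Σ J^j_i ℓ(i,j)` lies in the left coideal subalgebra `B` and is
`ad_r(B)`-invariant, then `J` satisfies the reflection equation
`J₁ R̃ J₂ R = R₂₁ J₂ R̃₂₁ J₁`, written out entrywise. -/
theorem reflection_equation_of_central
    (k H : Type*) [Field k] [Ring H] [HopfAlgebra k H]
    (σinv : H →ₗ[k] H)
    (hσ1 : ∀ x : H, σinv (HopfAlgebra.antipode (R := k) x) = x)
    (hσ2 : ∀ x : H, HopfAlgebra.antipode (R := k) (σinv x) = x)
    (B : Subalgebra k H)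
    (hB : ∀ b ∈ B, Coalgebra.comul (R := k) b ∈
      Submodule.span k {t : H ⊗[k] H | ∃ (h : H) (y : H), y ∈ B ∧ t = h ⊗ₜ[k] y})
    (N : ℕ) (hN : 1 ≤ N)
    (ℓ ℓp ℓm : Fin N → Fin N → H)
    (Rm Rtm : Fin N → Fin N → Fin N → Fin N → k)
    -- (a) linear independence of the ℓ(i,j)
    (hlin : LinearIndependent k fun p : Fin N × Fin N => ℓ p.1 p.2)
    -- (b) coproduct of ℓ:  Δℓ(i,j) = Σ_{m,n} ℓ(m,n) ⊗ σ(ℓ⁻(i,m))·ℓ⁺(n,j)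
    (hΔℓ : ∀ i j, Coalgebra.comul (R := k) (ℓ i j) =
      ∑ m, ∑ n, ℓ m n ⊗ₜ[k]
        (HopfAlgebra.antipode (R := k) (ℓm i m) * ℓp n j))
    -- (c) coproducts and counits of ℓ⁺, ℓ⁻
    (hΔp : ∀ i j, Coalgebra.comul (R := k) (ℓp i j) = ∑ m, ℓp i m ⊗ₜ[k] ℓp m j)
    (hΔm : ∀ i j, Coalgebra.comul (R := k) (ℓm i j) = ∑ m, ℓm i m ⊗ₜ[k] ℓm m j)
    (hεp : ∀ i j, Coalgebra.counit (R := k) (ℓp i j) = if i = j then (1 : k) else 0)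
    (hεm : ∀ i j, Coalgebra.counit (R := k) (ℓm i j) = if i = j then (1 : k) else 0)
    -- (d) action of ad_r σ(ℓ⁻(i,m)) on ℓ(k,j)
    (hd : ∀ i m i' j, adR k (HopfAlgebra.antipode (R := k) (ℓm i m)) (ℓ i' j) =
      ∑ a, ∑ b, ∑ l, (Rm l i' m a * Rtm i b l j) • ℓ a b)
    -- (e) action of ad_r σ⁻¹(ℓ⁺(n,i)) on ℓ(k,j)
    (he : ∀ n i i' j, adR k (σinv (ℓp n i)) (ℓ i' j) =
      ∑ a, ∑ b, ∑ l, (Rm b n j l * Rtm i' l a i) • ℓ a b)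
    (J : Fin N → Fin N → k)
    -- C = Σ_{i,j} J^j_i ℓ(i,j) belongs to B and is ad_r(B)-invariant
    (hCB : (∑ i, ∑ j, J j i • ℓ i j) ∈ B)
    (hCinv : ∀ b ∈ B, adR k b (∑ i, ∑ j, J j i • ℓ i j) =
      Coalgebra.counit (R := k) b • ∑ i, ∑ j, J j i • ℓ i j) :
    ∀ a b m n : Fin N,
      ∑ i, ∑ j, ∑ i', ∑ l, J n i * Rtm i b l j * J j i' * Rm l i' m a
        = ∑ i, ∑ j, ∑ i', ∑ l, Rm b n j l * J j i' * Rtm i' l a i * J i m :=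
  reflection_equation_of_central_general k H σinv hσ1 hσ2 B hB N ℓ ℓp ℓm Rm Rtm hlin hΔℓ hΔp hΔm hεp
    hεm hd he J hCB hCinv
end

section
/- Let H be a Hopf algebra over a field k, let t ∈ H be grouplike, and let x ∈ H satisfy Δx = t ⊗ x + x ⊗ 1. Then for all C ∈ H one has Δ((ad_r x)C) = Σ (ad_r x)C₍₁₎ ⊗ t⁻¹C₍₂₎ + (ad_r t)C₍₁₎ ⊗ t⁻¹C₍₂₎x − C₍₁₎ ⊗ t⁻¹xC₍₂₎, where ΔC = C₍₁₎ ⊗ C₍₂₎. -/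
/-! Since `t` is grouplike, `σ(t) = t⁻¹`, and applying `(σ ⊗ id) ∘ Δ` to `x` then gives
`σ(x) = -t⁻¹x`, so `(ad_r x)C = t⁻¹Cx - t⁻¹xC`. The formula follows by expanding `Δ` of both
products multiplicatively, using `Δ(t⁻¹) = t⁻¹ ⊗ t⁻¹` and `t⁻¹t = 1`. -/

open scoped TensorProduct

open Coalgebra HopfAlgebra

section SkewPrimitive

variable {R A : Type*} [CommRing R] [Ring A] [HopfAlgebra R A] {t x : A}

lemma algebraMap_counit_eq_zero_of_comul_eq (ht : counit (R := R) t = 1)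
    (hx : comul (R := R) x = t ⊗ₜ[R] x + x ⊗ₜ[R] 1) : algebraMap R A (counit x) = 0 := by
  have h := congr(TensorProduct.lid R A $(rTensor_counit_comul (R := R) x))
  simp only [hx, map_add, LinearMap.rTensor_tmul, ht, TensorProduct.lid_tmul, one_smul,
    add_eq_left] at h
  rw [Algebra.algebraMap_eq_smul_one, h]

lemma antipode_eq_neg_of_comul_eq (ht : counit (R := R) t = 1)
    (hx : comul (R := R) x = t ⊗ₜ[R] x + x ⊗ₜ[R] 1) : antipode R x = -(antipode R t * x) := by
  have h := mul_antipode_rTensor_comul_apply (R := R) x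
  simp only [hx, map_add, LinearMap.rTensor_tmul, LinearMap.mul'_apply, mul_one,
    algebraMap_counit_eq_zero_of_comul_eq ht hx] at h
  exact eq_neg_of_add_eq_zero_right h

end SkewPrimitive

section AdjointAction

variable {k H : Type*} [Field k] [Ring H] [HopfAlgebra k H]

lemma adR_apply_of_comul_eq_sum {m : H} {ι : Type*} {s : Finset ι} {a b : ι → H}
    (hm : comul (R := k) m = ∑ i ∈ s, a i ⊗ₜ[k] b i) (u : H) :
    adR k m u = ∑ i ∈ s, antipode k (a i) * u * b i := by
  simp [adR, hm, mul_assoc]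

lemma adR_apply_of_comul_eq_tmul_self {t : H} (ht : comul (R := k) t = t ⊗ₜ[k] t) (u : H) :
    adR k t u = antipode k t * u * t := by
  simpa using adR_apply_of_comul_eq_sum (s := {()}) (a := fun _ => t) (b := fun _ => t)
    (by simp [ht]) u

lemma adR_apply_of_comul_eq_s6 {t x : H} (ht : counit (R := k) t = 1)
    (hx : comul (R := k) x = t ⊗ₜ[k] x + x ⊗ₜ[k] 1) (u : H) :
    adR k x u = antipode k t * u * x - antipode k t * x * u := by
  rw [adR_apply_of_comul_eq_sum (s := Finset.univ) (a := ![t, x]) (b := ![x, 1]) (by simp [hx]),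
    Fin.sum_univ_two]
  simp [antipode_eq_neg_of_comul_eq ht hx, sub_eq_add_neg, mul_assoc]

end AdjointAction

theorem comul_adR_skewPrimitive_general
    (k H : Type*) [Field k] [Ring H] [HopfAlgebra k H]
    (t tinv x : H)
    (hΔt : Coalgebra.comul (R := k) t = t ⊗ₜ[k] t)
    (hεt : Coalgebra.counit (R := k) t = 1)
    (htinv1 : t * tinv = 1)
    (hΔx : Coalgebra.comul (R := k) x = t ⊗ₜ[k] x + x ⊗ₜ[k] 1)
    (C : H) {ι : Type*} (s : Finset ι) (C1 C2 : ι → H)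
    (hC : Coalgebra.comul (R := k) C = ∑ i ∈ s, C1 i ⊗ₜ[k] C2 i) :
    Coalgebra.comul (R := k) (adR k x C) =
      (∑ i ∈ s, (adR k x (C1 i)) ⊗ₜ[k] (tinv * C2 i))
      + (∑ i ∈ s, (adR k t (C1 i)) ⊗ₜ[k] (tinv * C2 i * x))
      - ∑ i ∈ s, (C1 i) ⊗ₜ[k] (tinv * x * C2 i) := by
  have ht : IsGroupLikeElem k t := ⟨hεt, hΔt⟩
  obtain rfl : antipode k t = tinv := left_inv_eq_right_inv ht.antipode_mul_cancel htinv1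
  simp only [adR_apply_of_comul_eq_s6 hεt hΔx, adR_apply_of_comul_eq_tmul_self hΔt, map_sub,
    Bialgebra.comul_mul, ht.antipode.comul_eq_tmul_self, hΔx, hC]
  simp only [Finset.mul_sum, Finset.sum_mul, mul_add, add_mul, Finset.sum_add_distrib,
    Algebra.TensorProduct.tmul_mul_tmul, TensorProduct.sub_tmul, Finset.sum_sub_distrib,
    mul_one, one_mul, ht.antipode_mul_cancel]
  abel

/-- Let `t ∈ H` be grouplike (with inverse `tinv = σ(t)`) and let `x` satisfy
`Δx = t ⊗ x + x ⊗ 1`.  Then for all `C ∈ H` (with `ΔC = Σ C₍₁₎ ⊗ C₍₂₎` an arbitrary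
finite representation) one has
`Δ((ad_r x)C) = Σ (ad_r x)C₍₁₎ ⊗ t⁻¹C₍₂₎ + (ad_r t)C₍₁₎ ⊗ t⁻¹C₍₂₎x − C₍₁₎ ⊗ t⁻¹xC₍₂₎`. -/
theorem comul_adR_skewPrimitive
    (k H : Type*) [Field k] [Ring H] [HopfAlgebra k H]
    (t tinv x : H)
    (hΔt : Coalgebra.comul (R := k) t = t ⊗ₜ[k] t)
    (hεt : Coalgebra.counit (R := k) t = 1)
    (htinv1 : t * tinv = 1) (htinv2 : tinv * t = 1)
    (hΔx : Coalgebra.comul (R := k) x = t ⊗ₜ[k] x + x ⊗ₜ[k] 1)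
    (C : H) {ι : Type*} (s : Finset ι) (C1 C2 : ι → H)
    (hC : Coalgebra.comul (R := k) C = ∑ i ∈ s, C1 i ⊗ₜ[k] C2 i) :
    Coalgebra.comul (R := k) (adR k x C) =
      (∑ i ∈ s, (adR k x (C1 i)) ⊗ₜ[k] (tinv * C2 i))
      + (∑ i ∈ s, (adR k t (C1 i)) ⊗ₜ[k] (tinv * C2 i * x))
      - ∑ i ∈ s, (C1 i) ⊗ₜ[k] (tinv * x * C2 i) :=
  comul_adR_skewPrimitive_general k H t tinv x hΔt hεt htinv1 hΔx C s C1 C2 hC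
end

section
/- Let H be a Hopf algebra over a field k, let t ∈ H be grouplike, and let y ∈ H satisfy Δy = 1 ⊗ y + y ⊗ t⁻¹. Then for all C ∈ H one has Δ((ad_r y)C) = Σ (ad_r y)C₍₁₎ ⊗ C₍₂₎t⁻¹ + C₍₁₎ ⊗ C₍₂₎y − (ad_r t⁻¹)C₍₁₎ ⊗ y t C₍₂₎ t⁻¹, where ΔC = C₍₁₎ ⊗ C₍₂₎. -/
/-!
The right adjoint action of a grouplike `g` is `u ↦ g⁻¹ u g`. For `y` with
`Δy = g ⊗ y + y ⊗ h` (`g`, `h` grouplike) the counit axiom forces `ε(y) = 0`, the antipode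
axiom then gives `σ(y) = -g⁻¹ y h⁻¹`, and so `(ad_r y) u = g⁻¹ u y - g⁻¹ y h⁻¹ u h`.
Applying the multiplicative map `Δ` to this expression and expanding the four resulting
products gives `Δ((ad_r y) C)`; the theorem is the case `g = 1`, `h = t⁻¹`.
-/

open scoped TensorProduct

open Coalgebra HopfAlgebra

section SkewPrimitive

variable {R A : Type*} [CommRing R]

variable (R) in
structure IsSkewPrimitiveElem [AddCommGroup A] [Module R A] [Coalgebra R A] (g h y : A) :
    Prop where
  comul_eq : comul (R := R) y = g ⊗ₜ[R] y + y ⊗ₜ[R] h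

variable [Ring A] {g h y : A}

lemma IsSkewPrimitiveElem.counit_eq_zero [Bialgebra R A] (hg : IsGroupLikeElem R g)
    (hh : IsGroupLikeElem R h) (hy : IsSkewPrimitiveElem R g h y) : counit (R := R) y = 0 := by
  have hsmul : counit (R := R) y • g = 0 := by
    have := congrArg (TensorProduct.rid R A) (lTensor_counit_comul (R := R) y)
    rw [hy.comul_eq] at this
    simpa [hh.counit_eq_one] using this
  simpa [hg.counit_eq_one] using congrArg (counit (R := R)) hsmul

lemma IsSkewPrimitiveElem.antipode_eq [HopfAlgebra R A] (hg : IsGroupLikeElem R g)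
    (hh : IsGroupLikeElem R h) (hy : IsSkewPrimitiveElem R g h y) :
    antipode R y = -(antipode R g * y * antipode R h) := by
  have hsum : antipode R g * y + antipode R y * h = 0 := by
    have := mul_antipode_rTensor_comul_apply (R := R) y
    rwa [hy.comul_eq, hy.counit_eq_zero hg hh, map_zero, map_add, map_add, LinearMap.rTensor_tmul,
      LinearMap.rTensor_tmul, LinearMap.mul'_apply, LinearMap.mul'_apply] at this
  calc antipode R y = antipode R y * h * antipode R h := by
        rw [mul_assoc, hh.mul_antipode_cancel, mul_one]
    _ = -(antipode R g * y * antipode R h) := by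
        rw [eq_neg_of_add_eq_zero_right hsum, neg_mul]

end SkewPrimitive

section AdjointAction

variable {k H : Type*} [Field k] [Ring H] [HopfAlgebra k H] {g h y : H}

lemma IsGroupLikeElem.adR_apply (hg : IsGroupLikeElem k g) (u : H) :
    adR k g u = antipode k g * u * g := by
  simp [adR, hg.comul_eq_tmul_self, mul_assoc]

lemma IsSkewPrimitiveElem.adR_apply (hg : IsGroupLikeElem k g) (hh : IsGroupLikeElem k h)
    (hy : IsSkewPrimitiveElem k g h y) (u : H) :
    adR k y u = antipode k g * u * y - antipode k g * y * antipode k h * u * h := by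
  simp [adR, hy.comul_eq, hy.antipode_eq hg hh, mul_assoc, sub_eq_add_neg]

theorem IsSkewPrimitiveElem.comul_adR (hg : IsGroupLikeElem k g) (hh : IsGroupLikeElem k h)
    (hy : IsSkewPrimitiveElem k g h y) (C : H) {ι : Type*} (s : Finset ι) (C1 C2 : ι → H)
    (hC : comul (R := k) C = ∑ i ∈ s, C1 i ⊗ₜ[k] C2 i) :
    comul (R := k) (adR k y C) =
      (∑ i ∈ s, adR k y (C1 i) ⊗ₜ[k] (antipode k g * C2 i * h))
      + (∑ i ∈ s, adR k g (C1 i) ⊗ₜ[k] (antipode k g * C2 i * y))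
      - ∑ i ∈ s, adR k h (C1 i) ⊗ₜ[k] (antipode k g * y * antipode k h * C2 i * h) := by
  have hg_cancel (x : H) : antipode k g * (g * x) = x := by
    rw [← mul_assoc, hg.antipode_mul_cancel, one_mul]
  have hh_cancel (x : H) : h * (antipode k h * x) = x := by
    rw [← mul_assoc, hh.mul_antipode_cancel, one_mul]
  rw [hy.adR_apply hg hh C]
  simp only [map_sub, Bialgebra.comul_mul]
  rw [hC, hy.comul_eq, hg.antipode.comul_eq_tmul_self, hh.antipode.comul_eq_tmul_self,
    hh.comul_eq_tmul_self]
  simp only [hy.adR_apply hg hh, hg.adR_apply, hh.adR_apply, TensorProduct.sub_tmul,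
    Finset.sum_sub_distrib, add_mul, mul_add, Finset.sum_mul, Finset.mul_sum,
    Algebra.TensorProduct.tmul_mul_tmul, mul_assoc, hg_cancel, hh_cancel, Finset.sum_add_distrib]
  abel

end AdjointAction

/-- Let `t ∈ H` be grouplike (with inverse `tinv = σ(t)`) and let `y` satisfy
`Δy = 1 ⊗ y + y ⊗ t⁻¹`.  Then for all `C ∈ H` (with `ΔC = Σ C₍₁₎ ⊗ C₍₂₎` an arbitrary
finite representation) one has
`Δ((ad_r y)C) = Σ (ad_r y)C₍₁₎ ⊗ C₍₂₎t⁻¹ + C₍₁₎ ⊗ C₍₂₎y − (ad_r t⁻¹)C₍₁₎ ⊗ y t C₍₂₎ t⁻¹`. -/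
theorem comul_adR_skewPrimitive'
    (k H : Type*) [Field k] [Ring H] [HopfAlgebra k H]
    (t tinv y : H)
    (hΔt : Coalgebra.comul (R := k) t = t ⊗ₜ[k] t)
    (hεt : Coalgebra.counit (R := k) t = 1)
    (htinv1 : t * tinv = 1) (htinv2 : tinv * t = 1)
    (hΔy : Coalgebra.comul (R := k) y = 1 ⊗ₜ[k] y + y ⊗ₜ[k] tinv)
    (C : H) {ι : Type*} (s : Finset ι) (C1 C2 : ι → H)
    (hC : Coalgebra.comul (R := k) C = ∑ i ∈ s, C1 i ⊗ₜ[k] C2 i) :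
    Coalgebra.comul (R := k) (adR k y C) =
      (∑ i ∈ s, (adR k y (C1 i)) ⊗ₜ[k] (C2 i * tinv))
      + (∑ i ∈ s, (C1 i) ⊗ₜ[k] (C2 i * y))
      - ∑ i ∈ s, (adR k tinv (C1 i)) ⊗ₜ[k] (y * t * C2 i * tinv) := by
  have ht : IsGroupLikeElem k t := ⟨hεt, hΔt⟩
  have htinv : IsGroupLikeElem k tinv := ht.of_mul_eq_one htinv1 htinv2
  have hσtinv : antipode k tinv = t := left_inv_eq_right_inv htinv.antipode_mul_cancel htinv2
  simpa [IsGroupLikeElem.one.adR_apply, hσtinv] using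
    IsSkewPrimitiveElem.comul_adR IsGroupLikeElem.one htinv ⟨hΔy⟩ C s C1 C2 hC
end
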